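/- For every feasible schedule σ on m machines: Σ_{j=1}^n C_j(σ) ≥ s · Σ_{j=1}^n ⌈j/m⌉. -/

import Mathlib

open Finset

/-- A feasible schedule on `m` identical machines for `n` jobs with processing
times `p` and uniform setup time `s`.  A part is a tuple
`(machine, job, q, t)`: a piece of length `q > 0` of the job, started at time
`t ≥ 0` and preceded by a setup of length `s`, occupying the machine during
`[t, t + s + q)`. -/
structure Schedule (m n : ℕ) (p : Fin n → ℝ) (s : ℝ) where
  parts : Finset (Fin m × Fin n × ℝ × ℝ)
  q_pos : ∀ x ∈ parts, 0 < x.2.2.1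
  t_nonneg : ∀ x ∈ parts, 0 ≤ x.2.2.2
  sum_q : ∀ j : Fin n,
    ∑ x ∈ parts.filter (fun x => x.2.1 = j), x.2.2.1 = p j
  disj : ∀ x ∈ parts, ∀ y ∈ parts, x ≠ y → x.1 = y.1 →
    x.2.2.2 + s + x.2.2.1 ≤ y.2.2.2 ∨ y.2.2.2 + s + y.2.2.1 ≤ x.2.2.2

namespace Schedule

variable {m n : ℕ} {p : Fin n → ℝ} {s : ℝ}

/-- The completion time of job `j`: the largest finishing time `t + s + q`
over all parts of job `j` (as a supremum of the finite set of these values). -/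
noncomputable def C (σ : Schedule m n p s) (j : Fin n) : ℝ :=
  sSup {r : ℝ | ∃ x ∈ σ.parts, x.2.1 = j ∧ r = x.2.2.2 + s + x.2.2.1}

/-- The total completion time of a schedule. -/
noncomputable def total (σ : Schedule m n p s) : ℝ := ∑ j, σ.C j

end Schedule

/-!
On one machine, parts whose setups take `s` each and which all end by time `T`
number at most `T / s`. If every job of a set `S` completes by `T`, pick one part
of each job of `S`: by pigeonhole some machine carries at least `⌈|S|/m⌉` of
them, so `T ≥ ⌈|S|/m⌉ s`. Applied to the `k` jobs that complete first, this
bounds the `k`-th smallest completion time by `⌈k/m⌉ s`; summing over `k` gives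
the claim.
-/

theorem card_mul_le_of_separated_intervals {ι : Type*} {P : Finset ι} {t q : ι → ℝ}
    {s T : ℝ} (hs : 0 ≤ s) (ht : ∀ x ∈ P, 0 ≤ t x) (hq : ∀ x ∈ P, 0 < q x)
    (hsep : ∀ x ∈ P, ∀ y ∈ P, x ≠ y → t x + s + q x ≤ t y ∨ t y + s + q y ≤ t x)
    (hT₀ : 0 ≤ T) (hT : ∀ x ∈ P, t x + s + q x ≤ T) :
    #P * s ≤ T := by
  classical
  induction P using Finset.induction_on_max_value t generalizing T with
  | empty => simpa using hT₀
  | insert a P ha hmax ih =>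
    have hbefore : ∀ x ∈ P, t x + s + q x ≤ t a := by
      intro x hx
      rcases hsep x (mem_insert_of_mem hx) a (mem_insert_self a P)
        (ne_of_mem_of_not_mem hx ha) with h | h
      · exact h
      · linarith [hq a (mem_insert_self a P), hmax x hx]
    have hP : #P * s ≤ t a :=
      ih (fun x hx => ht x (mem_insert_of_mem hx)) (fun x hx => hq x (mem_insert_of_mem hx))
        (fun x hx y hy => hsep x (mem_insert_of_mem hx) y (mem_insert_of_mem hy))
        (ht a (mem_insert_self a P)) hbefore
    rw [card_insert_of_notMem ha, Nat.cast_succ]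
    linarith [hT a (mem_insert_self a P), hq a (mem_insert_self a P)]

namespace Schedule

variable {m n : ℕ} {p : Fin n → ℝ} {s : ℝ}

theorem finish_le_C (σ : Schedule m n p s) {x : Fin m × Fin n × ℝ × ℝ} (hx : x ∈ σ.parts) :
    x.2.2.2 + s + x.2.2.1 ≤ σ.C x.2.1 := by
  refine le_csSup ?_ ⟨x, hx, rfl, rfl⟩
  refine ((σ.parts.finite_toSet.image fun y => y.2.2.2 + s + y.2.2.1).bddAbove).mono ?_
  rintro r ⟨y, hy, -, rfl⟩
  exact ⟨y, hy, rfl⟩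

theorem exists_part (hp : ∀ j, 0 < p j) (σ : Schedule m n p s) (j : Fin n) :
    ∃ x ∈ σ.parts, x.2.1 = j := by
  by_contra! h
  have hempty : σ.parts.filter (fun x => x.2.1 = j) = ∅ := filter_false_of_mem h
  have := σ.sum_q j
  rw [hempty, sum_empty] at this
  linarith [hp j]

theorem ceil_card_div_mul_le (hm : 0 < m) (hp : ∀ j, 0 < p j) (hs : 0 < s)
    (σ : Schedule m n p s) {S : Finset (Fin n)} (hS : S.Nonempty) {T : ℝ}
    (hT : ∀ j ∈ S, σ.C j ≤ T) :
    ((⌈(#S : ℚ) / m⌉ : ℤ) : ℝ) * s ≤ T := by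
  choose part hpart hjob using σ.exists_part hp
  have hfinish : ∀ j ∈ S, (part j).2.2.2 + s + (part j).2.2.1 ≤ T := fun j hj =>
    (hjob j ▸ σ.finish_le_C (hpart j)).trans (hT j hj)
  obtain ⟨i, -, hi⟩ := exists_le_card_fiber_of_nsmul_le_card_of_maps_to
    (f := fun j => (part j).1) (t := univ) (b := (#S : ℚ) / m)
    (fun j _ => mem_univ _) (univ_nonempty_iff.mpr ⟨⟨0, hm⟩⟩)
    (by rw [card_univ, Fintype.card_fin, nsmul_eq_mul, mul_div_cancel₀ _ (by positivity)])
  set F := {j ∈ S | (part j).1 = i}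
  have hceil : ⌈(#S : ℚ) / m⌉ ≤ #F := Int.ceil_le.mpr (by exact_mod_cast hi)
  have hT₀ : 0 ≤ T := by
    obtain ⟨j, hj⟩ := hS
    linarith [σ.t_nonneg _ (hpart j), σ.q_pos _ (hpart j), hfinish j hj]
  have hF : #F * s ≤ T := by
    refine card_mul_le_of_separated_intervals hs.le (fun j _ => σ.t_nonneg _ (hpart j))
      (fun j _ => σ.q_pos _ (hpart j)) ?_ hT₀ (fun j hj => hfinish j (mem_filter.mp hj).1)
    intro j hj k hk hjk
    refine σ.disj _ (hpart j) _ (hpart k) (fun h => hjk ?_) ?_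
    · rw [← hjob j, ← hjob k, h]
    · rw [(mem_filter.mp hj).2, (mem_filter.mp hk).2]
  calc ((⌈(#S : ℚ) / m⌉ : ℤ) : ℝ) * s ≤ #F * s := by
        gcongr
        exact_mod_cast hceil
    _ ≤ T := hF

end Schedule

/-- Every feasible schedule `σ` on `m` machines satisfies
`∑ⱼ C j σ ≥ s · ∑_{j=1}^n ⌈j/m⌉` (jobs counted `1, …, n`). -/
theorem stmt8 {m n : ℕ} (hm : 0 < m) {p : Fin n → ℝ} (hp : ∀ j, 0 < p j)
    {s : ℝ} (hs : 0 < s) (σ : Schedule m n p s) :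
    σ.total ≥
      s * ∑ j : Fin n, ((⌈(((j : ℕ) : ℚ) + 1) / (m : ℚ)⌉ : ℤ) : ℝ) := by
  set e := Tuple.sort σ.C
  rw [Schedule.total, ← Equiv.sum_comp e, mul_sum, ge_iff_le]
  refine sum_le_sum fun k _ => ?_
  set S := (Iic k).image e
  have hcard : #S = (k : ℕ) + 1 := by
    rw [card_image_of_injective _ e.injective, Fin.card_Iic]
  have hS : ∀ j ∈ S, σ.C j ≤ σ.C (e k) := by
    simp only [S, mem_image, mem_Iic, forall_exists_index, and_imp]
    rintro _ i hik rfl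
    exact Tuple.monotone_sort σ.C hik
  have hbound := σ.ceil_card_div_mul_le hm hp hs (by rw [← card_pos, hcard]; omega) hS
  rw [hcard] at hbound
  push_cast at hbound
  linarith
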